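/- arXiv:math/0509512 — 3 statements merged into one kernel-verified Lean document; each statement's English description precedes it below -/
import Mathlib

section
/- Let V be a finite-dimensional real inner product space, A ⊆ V nonempty compact convex, and λ ∈ V. If the support function h_A is (Fréchet) differentiable at λ with gradient x = ∇h_A(λ), then x is the unique point of A at which λ attains its supremum on A, i.e. x ∈ A and ⟪λ, y⟫ ≤ ⟪λ, x⟫ for all y ∈ A, and any point of A with this property equals x. -/
open InnerProductSpace

/-- If the support function of a nonempty compact convex set A is
differentiable at λ with gradient x, then x is the unique point of A where λ
attains its supremum on A. -/
theorem gradient_support_function_unique_maximizer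
    {V : Type*} [NormedAddCommGroup V] [InnerProductSpace ℝ V] [FiniteDimensional ℝ V]
    (A : Set V) (hne : A.Nonempty) (hcp : IsCompact A) (hcv : Convex ℝ A)
    (l x : V)
    (hgrad : HasGradientAt (fun m : V => sSup ((fun y => (inner ℝ m y : ℝ)) '' A)) x l) :
    x ∈ A ∧ (∀ y ∈ A, (inner ℝ l y : ℝ) ≤ (inner ℝ l x : ℝ)) ∧
      ∀ z ∈ A, (∀ y ∈ A, (inner ℝ l y : ℝ) ≤ (inner ℝ l z : ℝ)) → z = x := by
  set h : V → ℝ := fun m => sSup ((fun y => (inner ℝ m y : ℝ)) '' A) with hh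
  have hbdd : ∀ m : V, BddAbove ((fun y => (inner ℝ m y : ℝ)) '' A) := fun m =>
    ((hcp.image (Continuous.inner continuous_const continuous_id)).bddAbove)
  have hle : ∀ (m : V), ∀ y ∈ A, (inner ℝ m y : ℝ) ≤ h m := fun m y hy =>
    le_csSup (hbdd m) ⟨y, hy, rfl⟩
  -- key: any maximizer z equals x
  have key : ∀ z ∈ A, (∀ y ∈ A, (inner ℝ l y : ℝ) ≤ (inner ℝ l z : ℝ)) → z = x := by
    intro z hz hmax
    have hhl : h l = (inner ℝ l z : ℝ) := le_antisymm
      (csSup_le (hne.image _) (by rintro _ ⟨y, hy, rfl⟩; exact hmax y hy))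
      (hle l z hz)
    -- g m = h m - ⟪m, z⟫ has a global min at l
    have hlin : HasGradientAt (fun m : V => (inner ℝ m z : ℝ)) z l := by
      rw [hasGradientAt_iff_hasFDerivAt]
      have : (fun m : V => (inner ℝ m z : ℝ)) = fun m => ((toDual ℝ V z) m : ℝ) := by
        funext m; simp [toDual, real_inner_comm]
      rw [this]
      exact (toDual ℝ V z).hasFDerivAt
    have hg : HasGradientAt (fun m : V => h m - (inner ℝ m z : ℝ)) (x - z) l := by
      rw [hasGradientAt_iff_hasFDerivAt] at *
      have := hgrad.sub hlin
      rw [map_sub]; exact this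
    have hmin : IsLocalMin (fun m : V => h m - (inner ℝ m z : ℝ)) l := by
      apply Filter.Eventually.of_forall
      intro m
      simp only [hhl, sub_self]
      exact sub_nonneg.2 (hle m z hz)
    have h0 := hmin.hasFDerivAt_eq_zero (hasGradientAt_iff_hasFDerivAt.1 hg)
    have hxz : x - z = 0 := (toDual ℝ V).injective (by rw [h0, map_zero])
    exact (sub_eq_zero.1 hxz).symm
  obtain ⟨z, hz, hzmax⟩ := hcp.exists_isMaxOn hne
    (Continuous.continuousOn (Continuous.inner continuous_const continuous_id)
      (f := fun y : V => (inner ℝ l y : ℝ)))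
  have hzx := key z hz (fun y hy => hzmax hy)
  subst hzx
  exact ⟨hz, fun y hy => hzmax hy, key⟩
end

section
/- Let D, D' ⊆ ℝⁿ be compact domains and g : D → D' a C² diffeomorphism. Let K ⊆ D be compact convex and let δ > 0 be the distance from K to the complement of D. Then reach(g(K)) ≥ min{ (δ/2)·‖D(g⁻¹)‖₀⁻¹, ‖D(g⁻¹)‖₀⁻²·‖D²g‖₀⁻¹ }, where ‖·‖₀ denotes the sup-norm over the domain of the indicated derivative. -/
/-!
Let `y₁ = g a₁` and `y₂ = g a₂` be two nearest points of `g(K)` to `q`, at distance `d`.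
Minimality at `a₁` along the segment `[a₁, a₂] ⊆ K` (this is where convexity enters) kills the
first-order term of `t ↦ ⟪q - y₁, g (a₁ + t (a₂ - a₁))⟫`, so a second-order Taylor bound gives
`⟪q - y₁, y₂ - y₁⟫ ≤ d ‖D²g‖₀ ‖a₂ - a₁‖² / 2`, and symmetrically.
Since `|y₁ - y₂| ≤ 2d < δ / ‖D(g⁻¹)‖₀`, lifting the segment `[y₁, y₂]` through `g⁻¹` inside the
`δ`-ball around `a₁` (on which `g` is a local diffeomorphism) gives
`‖a₂ - a₁‖ ≤ ‖D(g⁻¹)‖₀ |y₂ - y₁|`. Adding the two inequalities yields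
`|y₂ - y₁|² ≤ d ‖D²g‖₀ ‖D(g⁻¹)‖₀² |y₂ - y₁|²`, and the factor is `< 1`.
-/

open scoped RealInnerProductSpace
open Set Metric Filter Topology

theorem sub_le_deriv_mul_add_of_deriv2_le {f f' f'' : ℝ → ℝ} {a b B : ℝ} (hab : a ≤ b)
    (hf : ∀ t ∈ Icc a b, HasDerivAt f (f' t) t)
    (hf' : ∀ t ∈ Icc a b, HasDerivAt f' (f'' t) t) (hB : ∀ t ∈ Icc a b, f'' t ≤ B) :
    f b - f a ≤ f' a * (b - a) + B / 2 * (b - a) ^ 2 := by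
  have hf'_le : ∀ t ∈ Icc a b, f' t ≤ f' a + B * (t - a) := by
    refine image_le_of_deriv_right_le_deriv_boundary
      (fun t ht => (hf' t ht).continuousAt.continuousWithinAt)
      (fun t ht => (hf' t (Ico_subset_Icc_self ht)).hasDerivWithinAt) (by simp) (by fun_prop)
      (fun t _ => ?_) (fun t ht => hB t (Ico_subset_Icc_self ht))
    simpa only [id, mul_one] using
      (((hasDerivAt_id t).sub_const a).const_mul B).const_add (f' a) |>.hasDerivWithinAt
  have hf_le : ∀ t ∈ Icc a b, f t ≤ f a + f' a * (t - a) + B / 2 * (t - a) ^ 2 := by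
    refine image_le_of_deriv_right_le_deriv_boundary
      (fun t ht => (hf t ht).continuousAt.continuousWithinAt)
      (fun t ht => (hf t (Ico_subset_Icc_self ht)).hasDerivWithinAt) (by simp) (by fun_prop)
      (fun t _ => ?_) (fun t ht => hf'_le t (Ico_subset_Icc_self ht))
    have h := ((((hasDerivAt_id t).sub_const a).const_mul (f' a)).const_add (f a)).add
      ((((hasDerivAt_id t).sub_const a).pow 2).const_mul (B / 2))
    exact (h.congr_deriv (by simp only [id]; ring)).hasDerivWithinAt
  linarith [hf_le b (right_mem_Icc.2 hab)]

section Lift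

variable {E F : Type*} [NormedAddCommGroup E] [NormedSpace ℝ E]
  [NormedAddCommGroup F] [NormedSpace ℝ F]

theorem HasStrictFDerivAt.map_nhds_eq_of_leftInvOn [FiniteDimensional ℝ E] {g ginv : E → E}
    {g' : E →L[ℝ] E} {s t : Set E} {x : E} (hg : HasStrictFDerivAt g g' x)
    (hginv : DifferentiableWithinAt ℝ ginv t (g x)) (hs : s ∈ 𝓝 x) (hst : MapsTo g s t)
    (hinv : LeftInvOn ginv g s) : map g (𝓝 x) = 𝓝 (g x) := by
  have hcomp : HasFDerivAt id ((fderivWithin ℝ ginv t (g x)).comp g') x :=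
    ((hginv.hasFDerivWithinAt.comp x hg.hasFDerivAt.hasFDerivWithinAt hst).hasFDerivAt
      hs).congr_of_eventuallyEq (eventually_of_mem hs fun y hy => (hinv hy).symm)
  have hleft : (fderivWithin ℝ ginv t (g x)).comp g' = ContinuousLinearMap.id ℝ E :=
    hcomp.unique (hasFDerivAt_id x)
  have hinj : Function.Injective g' :=
    Function.LeftInverse.injective fun u => DFunLike.congr_fun hleft u
  exact hg.map_nhds_eq_of_surj <|
    LinearMap.range_eq_top.2 (LinearMap.injective_iff_surjective.1 hinj)

theorem exists_dist_le_mul_of_isOpen_image_ball [ProperSpace E] {g : E → F} {ginv : F → E}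
    {a : E} {r M : ℝ} {z : F} (hg : ContinuousOn g (ball a r)) (hopen : IsOpen (g '' ball a r))
    (hginv : ∀ x ∈ ball a r, DifferentiableAt ℝ ginv (g x))
    (hM : ∀ x ∈ ball a r, ‖fderiv ℝ ginv (g x)‖ ≤ M) (hinv : LeftInvOn ginv g (ball a r))
    (hM₀ : 0 ≤ M) (hz : M * dist z (g a) < r) :
    ∃ u, dist u a ≤ M * dist z (g a) ∧ g u = z := by
  set L := dist z (g a)
  set σ : ℝ → F := fun s => g a + s • (z - g a)
  have hσ : Continuous σ := by fun_prop
  have hσ' : ∀ s, HasDerivAt σ (z - g a) s := fun s => by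
    simpa only [one_smul] using ((hasDerivAt_id' s).smul_const (z - g a)).const_add (g a)
  have hball : ∀ {s : ℝ} {u : E}, s ≤ 1 → dist u a ≤ M * L * s → u ∈ ball a r := fun hs hu =>
    mem_ball.2 <| hu.trans_lt <| (mul_le_of_le_one_right (by positivity) hs).trans_lt hz
  -- Continuity induction on `s ∈ [0, 1]`: the times `s` at which `σ s = g u` for some `u` within
  -- `M L s` of `a` form a closed set (a projection of the compact `C`), which extends to the right
  -- by the mean value inequality for `ginv` on the open set `g '' ball a r`.
  set C₀ : Set (ℝ × E) := {p | p.1 ∈ Icc 0 1 ∧ dist p.2 a ≤ M * L * p.1}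
  set C : Set (ℝ × E) := C₀ ∩ (fun p => (g p.2, σ p.1)) ⁻¹' diagonal F
  have hC : IsCompact C := by
    refine ((isCompact_Icc (a := 0) (b := 1)).prod (isCompact_closedBall a (M * L)))
      |>.of_isClosed_subset (ContinuousOn.preimage_isClosed_of_isClosed ?_ ?_ isClosed_diagonal) ?_
    · exact ((hg.comp continuous_snd.continuousOn fun p hp => hball hp.1.2 hp.2).prodMk
        (hσ.comp continuous_fst).continuousOn)
    · exact (isClosed_Icc.preimage continuous_fst).inter
        (isClosed_le (continuous_snd.dist continuous_const) (continuous_const.mul continuous_fst))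
    · rintro p ⟨⟨hp, hpa⟩, -⟩
      exact ⟨hp, hpa.trans (mul_le_of_le_one_right (by positivity) hp.2)⟩
  suffices 1 ∈ Prod.fst '' C by
    obtain ⟨⟨s, u⟩, ⟨⟨-, hu⟩, hgu⟩, rfl⟩ := this
    exact ⟨u, by simpa using hu, by simpa [σ] using hgu⟩
  refine IsClosed.Icc_subset_of_forall_mem_nhdsWithin ((hC.image continuous_fst).isClosed.inter
    isClosed_Icc) ⟨(0, a), ⟨⟨left_mem_Icc.2 zero_le_one, by simp⟩, by simp [σ]⟩, rfl⟩ ?_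
    (right_mem_Icc.2 zero_le_one)
  rintro _ ⟨⟨⟨s, u⟩, ⟨⟨-, hu⟩, hgu : g u = σ s⟩, rfl⟩, hs⟩
  obtain ⟨ε, hε, hεW⟩ := Metric.mem_nhds_iff.1 <| hσ.continuousAt.preimage_mem_nhds <|
    hopen.mem_nhds ⟨u, hball hs.2.le hu, hgu⟩
  refine mem_of_superset (Ioo_mem_nhdsGT (lt_min hs.2 (lt_add_of_pos_right s hε))) ?_
  rintro t ⟨hst, ht⟩
  have hW : ∀ τ ∈ Icc s t, ∃ x ∈ ball a r, g x = σ τ := fun τ hτ => hεW <| by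
    rw [mem_ball, Real.dist_eq, abs_lt]
    constructor <;> linarith [hτ.1, hτ.2, min_le_right 1 (s + ε)]
  have hderiv : ∀ τ ∈ Icc s t, HasDerivWithinAt (ginv ∘ σ)
      (fderiv ℝ ginv (σ τ) (z - g a)) (Icc s t) τ := fun τ hτ => by
    obtain ⟨x, hx, hxτ⟩ := hW τ hτ
    exact ((hxτ ▸ hginv x hx).hasFDerivAt.comp_hasDerivAt τ (hσ' τ)).hasDerivWithinAt
  have hbound : ∀ τ ∈ Ico s t, ‖fderiv ℝ ginv (σ τ) (z - g a)‖ ≤ M * L := fun τ hτ => by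
    obtain ⟨x, hx, hxτ⟩ := hW τ (Ico_subset_Icc_self hτ)
    rw [← hxτ, show L = ‖z - g a‖ from dist_eq_norm _ _]
    exact (fderiv ℝ ginv (g x)).le_of_opNorm_le (hM x hx) _
  obtain ⟨x, hx, hxt⟩ := hW t (right_mem_Icc.2 hst.le)
  have hmvt := norm_image_sub_le_of_norm_deriv_le_segment' hderiv hbound t (right_mem_Icc.2 hst.le)
  simp only [Function.comp_apply, ← hxt, ← hgu, hinv hx, hinv (hball hs.2.le hu)] at hmvt
  refine ⟨(t, x), ⟨⟨⟨hs.1.trans hst.le, ht.le.trans (min_le_left _ _)⟩, ?_⟩, hxt⟩, rfl⟩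
  calc dist x a ≤ dist x u + dist u a := dist_triangle x u a
    _ ≤ M * L * (t - s) + M * L * s := add_le_add (by rwa [dist_eq_norm]) hu
    _ = M * L * t := by ring

theorem dist_le_mul_dist_image_of_ball_subset [FiniteDimensional ℝ E] {g ginv : E → E}
    {D D' : Set E} {a b : E} {δ M : ℝ} (hg : ContDiffOn ℝ 1 g D)
    (hginv : DifferentiableOn ℝ ginv D') (hgD : MapsTo g D D') (hinv : LeftInvOn ginv g D)
    (hM : ∀ y ∈ D', ‖fderiv ℝ ginv y‖ ≤ M) (hM₀ : 0 ≤ M) (ha : ball a δ ⊆ D) (hb : b ∈ D)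
    (hab : M * dist (g b) (g a) < δ) : dist b a ≤ M * dist (g b) (g a) := by
  have hD : ∀ x ∈ ball a δ, D ∈ 𝓝 x := fun x hx => mem_of_superset (isOpen_ball.mem_nhds hx) ha
  have hmap : ∀ x ∈ ball a δ, map g (𝓝 x) = 𝓝 (g x) := fun x hx =>
    ((hg.contDiffAt (hD x hx)).hasStrictFDerivAt one_ne_zero).map_nhds_eq_of_leftInvOn
      (hginv _ (hgD (ha hx))) (hD x hx) hgD hinv
  have hopen : IsOpen (g '' ball a δ) := isOpen_iff_mem_nhds.2 <| by
    rintro _ ⟨x, hx, rfl⟩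
    rw [← hmap x hx]
    exact image_mem_map (isOpen_ball.mem_nhds hx)
  have hD' : ∀ x ∈ ball a δ, D' ∈ 𝓝 (g x) := fun x hx =>
    mem_of_superset (hopen.mem_nhds (mem_image_of_mem g hx)) (hgD.mono_left ha).image_subset
  obtain ⟨u, hu, hgu⟩ := exists_dist_le_mul_of_isOpen_image_ball (hg.continuousOn.mono ha) hopen
    (fun x hx => (hginv _ (hgD (ha hx))).differentiableAt (hD' x hx))
    (fun x hx => hM _ (hgD (ha hx))) (hinv.mono ha) hM₀ hab
  have hub : u = b := by rw [← hinv hb, ← hgu, hinv (ha (mem_ball.2 (hu.trans_lt hab)))]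
  exact hub ▸ hu

end Lift

section NearestPoint

variable {E F : Type*} [NormedAddCommGroup E] [NormedSpace ℝ E]
  [NormedAddCommGroup F] [InnerProductSpace ℝ F]

theorem IsMinOn.inner_fderiv_sub_nonpos {g : E → F} {K : Set E} {a b : E} {q : F}
    (hmin : IsMinOn (fun p => dist q (g p)) K a) (hK : Convex ℝ K) (ha : a ∈ K) (hb : b ∈ K)
    (hg : DifferentiableAt ℝ g a) :
    ⟪q - g a, fderiv ℝ g a (b - a)⟫ ≤ 0 := by
  have hsq : IsLocalMinOn (fun p => ‖q - g p‖ ^ 2) K a := by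
    refine IsMinOn.localize fun p hp => ?_
    simp only [mem_ofPred_eq, ← dist_eq_norm]
    exact pow_le_pow_left₀ dist_nonneg (hmin hp) 2
  have h := hsq.hasFDerivWithinAt_nonneg
    ((hasFDerivAt_const q a).sub hg.hasFDerivAt).norm_sq.hasFDerivWithinAt
    (sub_mem_posTangentConeAt_of_segment_subset (hK.segment_subset ha hb))
  simp only [smul_apply, ContinuousLinearMap.comp_apply, innerSL_apply_apply, zero_sub,
    Pi.sub_apply, neg_apply, inner_neg_right, nsmul_eq_mul, Nat.cast_ofNat] at h
  linarith

theorem IsMinOn.inner_sub_image_le {g : E → F} {K : Set E} {a b : E} {q : F} {M : ℝ}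
    (hmin : IsMinOn (fun p => dist q (g p)) K a) (hK : Convex ℝ K) (ha : a ∈ K) (hb : b ∈ K)
    (hg : ∀ x ∈ K, ContDiffAt ℝ 2 g x) (hM : ∀ x ∈ K, ‖fderiv ℝ (fderiv ℝ g) x‖ ≤ M) :
    ⟪q - g a, g b - g a⟫ ≤ dist q (g a) * M * ‖b - a‖ ^ 2 / 2 := by
  set v := b - a with hv
  set c := q - g a
  set γ : ℝ → E := fun s => a + s • v
  have hγK : ∀ t ∈ Icc (0 : ℝ) 1, γ t ∈ K := fun t ht => hK.add_smul_sub_mem ha hb ht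
  have hγ : ∀ t : ℝ, HasDerivAt γ v t := fun t => by
    simpa only [one_smul] using ((hasDerivAt_id' t).smul_const v).const_add a
  have hderiv : ∀ t ∈ Icc (0 : ℝ) 1,
      HasDerivAt (fun s => ⟪c, g (γ s)⟫) ⟪c, fderiv ℝ g (γ t) v⟫ t := fun t ht =>
    (innerSL ℝ c).hasFDerivAt.comp_hasDerivAt t <|
      ((hg _ (hγK t ht)).differentiableAt two_ne_zero).hasFDerivAt.comp_hasDerivAt t (hγ t)
  have hderiv2 : ∀ t ∈ Icc (0 : ℝ) 1, HasDerivAt (fun s => ⟪c, fderiv ℝ g (γ s) v⟫)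
      ⟪c, fderiv ℝ (fderiv ℝ g) (γ t) v v⟫ t := fun t ht => by
    have hC1 : ContDiffAt ℝ 1 (fderiv ℝ g) (γ t) := (hg _ (hγK t ht)).fderiv_right (by norm_num)
    have h : HasDerivAt (fun s => fderiv ℝ g (γ s)) (fderiv ℝ (fderiv ℝ g) (γ t) v) t :=
      (hC1.differentiableAt one_ne_zero).hasFDerivAt.comp_hasDerivAt t (hγ t)
    exact (innerSL ℝ c).hasFDerivAt.comp_hasDerivAt t <| by
      simpa only [map_zero, add_zero] using h.clm_apply (hasDerivAt_const t v)
  have hbound : ∀ t ∈ Icc (0 : ℝ) 1,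
      ⟪c, fderiv ℝ (fderiv ℝ g) (γ t) v v⟫ ≤ dist q (g a) * M * ‖v‖ ^ 2 := fun t ht => calc
    ⟪c, fderiv ℝ (fderiv ℝ g) (γ t) v v⟫ ≤ ‖c‖ * (‖fderiv ℝ (fderiv ℝ g) (γ t)‖ * ‖v‖ * ‖v‖) :=
      (real_inner_le_norm _ _).trans (by gcongr; exact ContinuousLinearMap.le_opNorm₂ _ _ _)
    _ ≤ ‖c‖ * (M * ‖v‖ * ‖v‖) := by gcongr; exact hM _ (hγK t ht)
    _ = dist q (g a) * M * ‖v‖ ^ 2 := by rw [dist_eq_norm]; ring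
  have htaylor := sub_le_deriv_mul_add_of_deriv2_le zero_le_one hderiv hderiv2 hbound
  have hfirst := hmin.inner_fderiv_sub_nonpos hK ha hb ((hg a ha).differentiableAt two_ne_zero)
  simp only [γ, zero_smul, add_zero, one_smul, sub_zero, mul_one, one_pow, hv,
    add_sub_cancel] at htaylor
  rw [inner_sub_right]
  linarith

theorem eq_of_inner_sub_le_mul_norm_sq {q y₁ y₂ : F} {ε : ℝ} (hε : ε < 1)
    (h₁ : ⟪q - y₁, y₂ - y₁⟫ ≤ ε * ‖y₂ - y₁‖ ^ 2 / 2)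
    (h₂ : ⟪q - y₂, y₁ - y₂⟫ ≤ ε * ‖y₁ - y₂‖ ^ 2 / 2) : y₁ = y₂ := by
  have hsum : ⟪q - y₁, y₂ - y₁⟫ + ⟪q - y₂, y₁ - y₂⟫ = ‖y₂ - y₁‖ ^ 2 := by
    rw [← neg_sub y₂ y₁, inner_neg_right, ← sub_eq_add_neg, ← inner_sub_left,
      sub_sub_sub_cancel_left, real_inner_self_eq_norm_sq]
  rw [norm_sub_rev] at h₂
  have : ‖y₂ - y₁‖ ^ 2 ≤ 0 := by nlinarith [sq_nonneg ‖y₂ - y₁‖]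
  exact (sub_eq_zero.1 (norm_eq_zero.1 (pow_eq_zero_iff two_ne_zero |>.1
    (le_antisymm this (sq_nonneg _))))).symm

end NearestPoint

theorem reach_of_diffeomorphic_image_of_convex_general
    {n : ℕ} (D D' K : Set (EuclideanSpace ℝ (Fin n)))
    (g ginv : EuclideanSpace ℝ (Fin n) → EuclideanSpace ℝ (Fin n))
    (hg : ContDiffOn ℝ 2 g D) (hginv : ContDiffOn ℝ 1 ginv D')
    (himg : g '' D = D')
    (hli : ∀ x ∈ D, ginv (g x) = x)
    (hKne : K.Nonempty) (hKcp : IsCompact K) (hKcv : Convex ℝ K) (hKD : K ⊆ D)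
    (δ : ℝ) (hδ : 0 < δ) (hδdist : ∀ x ∈ K, ∀ y, y ∉ D → δ ≤ dist x y)
    (M₁ M₂ : ℝ) (hM₁ : 0 < M₁) (hM₂ : 0 < M₂)
    (hM₁b : ∀ y ∈ D', ‖fderiv ℝ ginv y‖ ≤ M₁)
    (hM₂b : ∀ x ∈ D, ‖fderiv ℝ (fderiv ℝ g) x‖ ≤ M₂) :
    ∀ q : EuclideanSpace ℝ (Fin n),
      Metric.infDist q (g '' K) < min (δ / 2 * M₁⁻¹) (M₁⁻¹ ^ 2 * M₂⁻¹) →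
      ∃! y, y ∈ g '' K ∧ dist q y = Metric.infDist q (g '' K) := by
  intro q hq
  set d := infDist q (g '' K)
  have hd₁ : M₁ * (2 * d) < δ := by
    have := (lt_min_iff.1 hq).1
    rw [lt_mul_inv_iff₀ hM₁] at this
    linarith
  have hd₂ : d * M₂ * M₁ ^ 2 < 1 := by
    have := (lt_min_iff.1 hq).2
    rwa [lt_mul_inv_iff₀ hM₂, inv_pow, ← one_div, lt_div_iff₀ (by positivity)] at this
  have hball : ∀ x ∈ K, ball x δ ⊆ D := fun x hx y hy =>
    by_contra fun hyD => (hδdist x hx y hyD).not_gt (mem_ball'.1 hy)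
  have hg₂ : ∀ x ∈ K, ContDiffAt ℝ 2 g x := fun x hx =>
    hg.contDiffAt (mem_of_superset (ball_mem_nhds x hδ) (hball x hx))
  have hside : ∀ a ∈ K, ∀ b ∈ K, dist q (g a) = d → dist q (g b) = d →
      ⟪q - g a, g b - g a⟫ ≤ d * M₂ * M₁ ^ 2 * ‖g b - g a‖ ^ 2 / 2 := by
    intro a ha b hb hqa hqb
    have hmin : IsMinOn (fun p => dist q (g p)) K a := isMinOn_iff.2 fun p hp => by
      rw [hqa]; exact infDist_le_dist_of_mem (mem_image_of_mem g hp)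
    have hδ' : M₁ * dist (g b) (g a) < δ :=
      lt_of_le_of_lt (by gcongr; linarith [dist_triangle_left (g b) (g a) q]) hd₁
    have hlip := dist_le_mul_dist_image_of_ball_subset (hg.of_le one_le_two)
      (hginv.differentiableOn one_ne_zero) (himg ▸ mapsTo_image g D) hli hM₁b hM₁.le
      (hball a ha) (hKD hb) hδ'
    rw [dist_eq_norm, dist_eq_norm] at hlip
    calc ⟪q - g a, g b - g a⟫ ≤ d * M₂ * ‖b - a‖ ^ 2 / 2 :=
          hqa ▸ hmin.inner_sub_image_le hKcv ha hb hg₂ fun x hx => hM₂b x (hKD hx)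
      _ ≤ d * M₂ * (M₁ * ‖g b - g a‖) ^ 2 / 2 := by
          gcongr; exact mul_nonneg infDist_nonneg hM₂.le
      _ = d * M₂ * M₁ ^ 2 * ‖g b - g a‖ ^ 2 / 2 := by ring
  obtain ⟨y, hy, hqy⟩ := (hKcp.image_of_continuousOn (hg.continuousOn.mono hKD))
    |>.exists_infDist_eq_dist (hKne.image g) q
  refine ⟨y, ⟨hy, hqy.symm⟩, ?_⟩
  rintro _ ⟨⟨b, hb, rfl⟩, hqb⟩
  obtain ⟨a, ha, rfl⟩ := hy
  exact eq_of_inner_sub_le_mul_norm_sq hd₂ (hside b hb a ha hqb hqy.symm)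
    (hside a ha b hb hqy.symm hqb)

/-- If g : D → D' is a C² diffeomorphism of compact domains and K ⊆ D
is compact convex at distance δ from the complement of D, then
reach(g(K)) ≥ min{(δ/2)·M₁⁻¹, M₁⁻²·M₂⁻¹}, where M₁ bounds ‖D(g⁻¹)‖₀ and M₂ bounds
‖D²g‖₀; reach ≥ m is expressed by unique nearest points for all points at distance
< m from g(K). -/
theorem reach_of_diffeomorphic_image_of_convex
    {n : ℕ} (D D' K : Set (EuclideanSpace ℝ (Fin n)))
    (hD : IsCompact D) (hD' : IsCompact D')
    (g ginv : EuclideanSpace ℝ (Fin n) → EuclideanSpace ℝ (Fin n))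
    (hg : ContDiffOn ℝ 2 g D) (hginv : ContDiffOn ℝ 1 ginv D')
    (himg : g '' D = D')
    (hli : ∀ x ∈ D, ginv (g x) = x) (hri : ∀ y ∈ D', g (ginv y) = y)
    (hKne : K.Nonempty) (hKcp : IsCompact K) (hKcv : Convex ℝ K) (hKD : K ⊆ D)
    (δ : ℝ) (hδ : 0 < δ) (hδdist : ∀ x ∈ K, ∀ y, y ∉ D → δ ≤ dist x y)
    (M₁ M₂ : ℝ) (hM₁ : 0 < M₁) (hM₂ : 0 < M₂)
    (hM₁b : ∀ y ∈ D', ‖fderiv ℝ ginv y‖ ≤ M₁)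
    (hM₂b : ∀ x ∈ D, ‖fderiv ℝ (fderiv ℝ g) x‖ ≤ M₂) :
    ∀ q : EuclideanSpace ℝ (Fin n),
      Metric.infDist q (g '' K) < min (δ / 2 * M₁⁻¹) (M₁⁻¹ ^ 2 * M₂⁻¹) →
      ∃! y, y ∈ g '' K ∧ dist q y = Metric.infDist q (g '' K) :=
  reach_of_diffeomorphic_image_of_convex_general D D' K g ginv hg hginv himg hli hKne hKcp hKcv hKD
    δ hδ hδdist M₁ M₂ hM₁ hM₂ hM₁b hM₂b
end

section
/- Let V be a finite-dimensional real inner product space and A ∈ K(V) a nonempty compact convex set. The map P_A : V → V × V given by P_A(x) = (p_A(x), x − p_A(x)), where p_A is the nearest-point projection onto A, is a bi-Lipschitz homeomorphism of V onto its image Nor(A) = {(a, v) : a ∈ A, ⟪v, y − a⟫ ≤ 0 for all y ∈ A}, with inverse induced by (x, y) ↦ x + y. -/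
/-- The map P_A(x) = (p_A(x), x − p_A(x)) is a bi-Lipschitz
homeomorphism of V onto the normal bundle Nor(A), with inverse induced by
(x, y) ↦ x + y. -/
theorem normal_bundle_bilipschitz_parametrization
    {V : Type*} [NormedAddCommGroup V] [InnerProductSpace ℝ V] [FiniteDimensional ℝ V]
    (A : Set V) (hne : A.Nonempty) (hcp : IsCompact A) (hcv : Convex ℝ A)
    (p : V → V) (hp : ∀ x, p x ∈ A ∧ dist x (p x) = Metric.infDist x A) :
    ∃ L L' : NNReal,
      LipschitzWith L (fun x : V => (p x, x - p x)) ∧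
      Function.Injective (fun x : V => (p x, x - p x)) ∧
      Set.range (fun x : V => (p x, x - p x))
        = {q : V × V | q.1 ∈ A ∧ ∀ y ∈ A, (inner ℝ q.2 (y - q.1) : ℝ) ≤ 0} ∧
      LipschitzWith L' (fun q : V × V => q.1 + q.2) ∧
      (∀ x : V, p x + (x - p x) = x) ∧
      ∀ q ∈ {q : V × V | q.1 ∈ A ∧ ∀ y ∈ A, (inner ℝ q.2 (y - q.1) : ℝ) ≤ 0},
        (p (q.1 + q.2), (q.1 + q.2) - p (q.1 + q.2)) = q := by
  haveI : Nonempty A := hne.to_subtype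
  -- variational inequality
  have hvar : ∀ x, ∀ y ∈ A, (inner ℝ (x - p x) (y - p x) : ℝ) ≤ 0 := by
    intro x
    have h1 : ‖x - p x‖ = ⨅ w : A, ‖x - w‖ := by
      have h2 := (hp x).2
      rw [dist_eq_norm] at h2
      rw [h2, Metric.infDist_eq_iInf]
      simp_rw [dist_eq_norm]
    exact (norm_eq_iInf_iff_real_inner_le_zero hcv (hp x).1).mp h1
  -- uniqueness
  have huniq : ∀ x a, a ∈ A → (∀ y ∈ A, (inner ℝ (x - a) (y - a) : ℝ) ≤ 0) → p x = a := by
    intro x a ha hA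
    have h1 := hvar x a ha
    have h2 := hA (p x) (hp x).1
    have key : ‖a - p x‖ ^ 2 ≤ 0 := by
      have e : ‖a - p x‖ ^ 2
          = (inner ℝ (x - p x) (a - p x) : ℝ) + inner ℝ (x - a) (p x - a) := by
        rw [show (p x - a : V) = -(a - p x) by abel, inner_neg_right,
          ← sub_eq_add_neg, ← inner_sub_left,
          show (x - p x) - (x - a) = a - p x by abel,
          real_inner_self_eq_norm_sq]
      linarith
    have : a - p x = 0 := by
      have := norm_nonneg (a - p x)
      have h0 : ‖a - p x‖ = 0 := by nlinarith
      exact norm_eq_zero.mp h0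
    rw [sub_eq_zero] at this
    exact this.symm
  -- nonexpansive
  have hplip : LipschitzWith 1 p := by
    refine LipschitzWith.of_dist_le_mul fun x z => ?_
    rw [dist_eq_norm, dist_eq_norm, NNReal.coe_one, one_mul]
    have h1 := hvar x (p z) (hp z).1
    have h2 := hvar z (p x) (hp x).1
    have key : ‖p x - p z‖ ^ 2 ≤ (inner ℝ (x - z) (p x - p z) : ℝ) := by
      have e1 : (inner ℝ (x - p x) (p z - p x) : ℝ) = -inner ℝ (x - p x) (p x - p z) := by
        rw [show (p z - p x : V) = -(p x - p z) by abel, inner_neg_right]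
      have e2 : (inner ℝ (x - z) (p x - p z) : ℝ)
          = inner ℝ (x - p x) (p x - p z) + inner ℝ (p x - p z) (p x - p z)
            + inner ℝ (p z - z) (p x - p z) := by
        rw [← inner_add_left, ← inner_add_left]
        congr 1
        abel
      have e3 : (inner ℝ (p z - z) (p x - p z) : ℝ) = -inner ℝ (z - p z) (p x - p z) := by
        rw [show (p z - z : V) = -(z - p z) by abel, inner_neg_left]
      rw [e2, e3]
      rw [real_inner_self_eq_norm_sq]
      linarith [e1 ▸ h1]
    have hle := real_inner_le_norm (x - z) (p x - p z)
    nlinarith [norm_nonneg (p x - p z), norm_nonneg (x - z)]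
  refine ⟨max 1 (1 + 1), 1 + 1, ?_, ?_, ?_, ?_, ?_, ?_⟩
  · exact LipschitzWith.prodMk hplip (LipschitzWith.id.sub hplip)
  · intro x z h
    have h1 : p x = p z := congrArg Prod.fst h
    have h2 : x - p x = z - p z := congrArg Prod.snd h
    have := congrArg₂ (· + ·) h1 h2
    simpa using this
  · ext q
    constructor
    · rintro ⟨x, rfl⟩
      exact ⟨(hp x).1, hvar x⟩
    · rintro ⟨hq1, hq2⟩
      refine ⟨q.1 + q.2, ?_⟩
      have hpq : p (q.1 + q.2) = q.1 := by
        refine huniq _ _ hq1 ?_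
        intro y hy
        simpa using hq2 y hy
      dsimp only
      rw [hpq]
      simp
  · exact LipschitzWith.prod_fst.add LipschitzWith.prod_snd
  · intro x; abel
  · rintro q ⟨hq1, hq2⟩
    have hpq : p (q.1 + q.2) = q.1 := by
      refine huniq _ _ hq1 ?_
      intro y hy
      simpa using hq2 y hy
    rw [hpq]
    simp
end
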